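/- arXiv:2303.13084 — 2 statements merged into one kernel-verified Lean document; each statement's English description precedes it below -/
import Mathlib

section
/- Let P ⊆ ℝ^d be a full-dimensional nearly Gorenstein lattice polytope. Then there exists a reflexive polytope Q ⊆ ℝ^d such that every primitive inner facet normal n_F of P is a lattice point on the boundary of the polar dual Q*, i.e. {n_F : F a facet of P} ⊆ ∂Q* ∩ (ℤ^d)*, and moreover every vertex of Q* occurs as a facet normal of P, i.e. vert(Q*) ⊆ {n_F : F a facet of P}. -/
open Set Pointwise

/-- The set of lattice points of `ℝ^d`. -/
def latticePoints (d : ℕ) : Set (Fin d → ℝ) :=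
  {x | ∀ i, ∃ z : ℤ, x i = (z : ℝ)}

/-- A lattice polytope: the convex hull of a finite set of lattice points. -/
def IsLatticePolytope {d : ℕ} (P : Set (Fin d → ℝ)) : Prop :=
  ∃ V : Finset (Fin d → ℝ), (V : Set (Fin d → ℝ)) ⊆ latticePoints d ∧
    P = convexHull ℝ (V : Set (Fin d → ℝ))

/-- The natural pairing of an integral linear functional with a point of `ℝ^d`. -/
def pairing {d : ℕ} (n : Fin d → ℤ) (x : Fin d → ℝ) : ℝ :=
  ∑ i, (n i : ℝ) * x i

/-- `P = {x | n_F(x) ≥ -h_F}` is an irredundant presentation with primitive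
integral inner normals, i.e. the facet presentation of `P`. -/
def IsFacetPresentation {d m : ℕ} (P : Set (Fin d → ℝ))
    (n : Fin m → Fin d → ℤ) (h : Fin m → ℤ) : Prop :=
  P = {x | ∀ i, pairing (n i) x ≥ -(h i : ℝ)} ∧
  (∀ i, Finset.univ.gcd (n i) = 1) ∧
  (∀ i, ∃ x : Fin d → ℝ, pairing (n i) x < -(h i : ℝ) ∧
    ∀ j, j ≠ i → pairing (n j) x ≥ -(h j : ℝ))

/-- `a` is the codegree of `P`: the least `k ≥ 1` such that `int(kP)` contains
a lattice point. -/
def IsCodegree {d : ℕ} (P : Set (Fin d → ℝ)) (a : ℕ) : Prop :=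
  1 ≤ a ∧ (interior ((a : ℝ) • P) ∩ latticePoints d).Nonempty ∧
    ∀ k : ℕ, 1 ≤ k → (interior ((k : ℝ) • P) ∩ latticePoints d).Nonempty → a ≤ k

/-- The floor polytope `⌊R⌋ = conv(int(R) ∩ ℤ^d)`. -/
def floorPoly {d : ℕ} (R : Set (Fin d → ℝ)) : Set (Fin d → ℝ) :=
  convexHull ℝ (interior R ∩ latticePoints d)

/-- The remainder polytope `{P} = conv{x ∈ ℤ^d | n_F(x) ≥ (a-1)h_F - 1}`,
defined in terms of the facet presentation data and the codegree `a`. -/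
def remPoly {d m : ℕ} (n : Fin m → Fin d → ℤ) (h : Fin m → ℤ) (a : ℕ) :
    Set (Fin d → ℝ) :=
  convexHull ℝ {x | x ∈ latticePoints d ∧
    ∀ i, pairing (n i) x ≥ ((a : ℝ) - 1) * (h i : ℝ) - 1}

/-- The cone `C_P ⊆ ℝ^d × ℝ` over `P`, in terms of the facet presentation. -/
def coneOver {d m : ℕ} (n : Fin m → Fin d → ℤ) (h : Fin m → ℤ) :
    Set ((Fin d → ℝ) × ℝ) :=
  {p | ∀ i, pairing (n i) p.1 ≥ -(p.2 * (h i : ℝ))}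

/-- The interior `int(C_P)` of the cone over `P`. -/
def intCone {d m : ℕ} (n : Fin m → Fin d → ℤ) (h : Fin m → ℤ) :
    Set ((Fin d → ℝ) × ℝ) :=
  {p | ∀ i, pairing (n i) p.1 > -(p.2 * (h i : ℝ))}

/-- The anticanonical set `ant(C_P)` of the cone over `P`. -/
def antCone {d m : ℕ} (n : Fin m → Fin d → ℤ) (h : Fin m → ℤ) :
    Set ((Fin d → ℝ) × ℝ) :=
  {p | ∀ i, pairing (n i) p.1 ≥ -(p.2 * (h i : ℝ)) - 1}

/-- Lattice points of `ℝ^d × ℝ = ℝ^{d+1}`. -/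
def latticePairs (d : ℕ) : Set ((Fin d → ℝ) × ℝ) :=
  {p | p.1 ∈ latticePoints d ∧ ∃ z : ℤ, p.2 = (z : ℝ)}

/-- The nearly Gorenstein condition with respect to a given facet presentation:
`(C_P ∩ ℤ^{d+1}) \ {0} ⊆ (int(C_P) ∩ ℤ^{d+1}) + (ant(C_P) ∩ ℤ^{d+1})`. -/
def NGIncl {d m : ℕ} (n : Fin m → Fin d → ℤ) (h : Fin m → ℤ) : Prop :=
  (coneOver n h ∩ latticePairs d) \ {(0 : (Fin d → ℝ) × ℝ)} ⊆
    (intCone n h ∩ latticePairs d) + (antCone n h ∩ latticePairs d)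

/-- A full-dimensional lattice polytope is nearly Gorenstein if the nearly
Gorenstein inclusion holds for its facet presentation. -/
def NearlyGorenstein {d : ℕ} (P : Set (Fin d → ℝ)) : Prop :=
  ∃ (m : ℕ) (n : Fin m → Fin d → ℤ) (h : Fin m → ℤ),
    IsFacetPresentation P n h ∧ NGIncl n h

/-- The polar dual `Q* = {y | y(x) ≥ -1 for all x ∈ Q}`. -/
def polarDual {d : ℕ} (Q : Set (Fin d → ℝ)) : Set (Fin d → ℝ) :=
  {y | ∀ x ∈ Q, (∑ i, y i * x i) ≥ -1}

/-- A reflexive polytope: a lattice polytope with `0` in its interior whose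
polar dual is again a lattice polytope. -/
def IsReflexive {d : ℕ} (Q : Set (Fin d → ℝ)) : Prop :=
  IsLatticePolytope Q ∧ (0 : Fin d → ℝ) ∈ interior Q ∧
    IsLatticePolytope (polarDual Q)

/-- A Gorenstein polytope: some dilate `kP`, translated by a lattice vector,
is reflexive. -/
def IsGorenstein {d : ℕ} (P : Set (Fin d → ℝ)) : Prop :=
  ∃ (k : ℕ) (w : Fin d → ℝ), 1 ≤ k ∧ w ∈ latticePoints d ∧
    IsReflexive ((fun x => x - w) '' ((k : ℝ) • P))

/-- The integer decomposition property. -/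
def IsIDP {d : ℕ} (P : Set (Fin d → ℝ)) : Prop :=
  ∀ k : ℕ, 1 ≤ k → ∀ x ∈ ((k : ℝ) • P) ∩ latticePoints d,
    ∃ y : Fin k → Fin d → ℝ, (∀ j, y j ∈ P ∩ latticePoints d) ∧ x = ∑ j, y j

/-- Minkowski indecomposability of a lattice polytope. -/
def IsIndecomposable {d : ℕ} (P : Set (Fin d → ℝ)) : Prop :=
  (¬ ∃ p : Fin d → ℝ, P = {p}) ∧
  ∀ P₁ P₂ : Set (Fin d → ℝ), IsLatticePolytope P₁ → IsLatticePolytope P₂ →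
    P = P₁ + P₂ → (∃ p, P₁ = {p}) ∨ (∃ p, P₂ = {p})

/-- A `(0,1)`-polytope: the convex hull of a set of `(0,1)`-vectors. -/
def Is01Polytope {d : ℕ} (P : Set (Fin d → ℝ)) : Prop :=
  ∃ V : Finset (Fin d → ℝ), (∀ v ∈ V, ∀ i, v i = 0 ∨ v i = 1) ∧
    P = convexHull ℝ (V : Set (Fin d → ℝ))

/-!
Take `Q = {x | n_F(x) ≥ -1 for all F}`. As `P` is bounded with an interior point, `Q` is bounded,
`0 ∈ int Q` and `0 ∈ conv{n_F}`, whence `Q* = conv{n_F}`. For a vertex `p` of `P`, the nearly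
Gorenstein condition applied to `(p, 1)` gives a lattice point of `Q` lying on `{n_F = -1}` for
every facet `F ∋ p`; this point minimises over `Q` every linear functional that is minimised over
`P` at `p`. Hence every linear functional attains its minimum over `Q` at a lattice point, so `Q`
is a lattice polytope, and integrality forces `min_Q n_F = -1`, i.e. `n_F ∈ ∂Q*`.
-/

open Bornology Filter Topology

section Polyhedron

variable {ι : Type*} {d : ℕ}

def polyhedron (a : ι → Fin d → ℝ) (b : ι → ℝ) : Set (Fin d → ℝ) :=
  {x | ∀ j, b j ≤ a j ⬝ᵥ x}

lemma convex_setOf_le_dotProduct (c : ℝ) (g : Fin d → ℝ) : Convex ℝ {x | c ≤ g ⬝ᵥ x} :=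
  convex_halfSpace_ge ⟨dotProduct_add g, fun r x => dotProduct_smul r g x⟩ c

lemma exists_dotProduct_separation {s : Set (Fin d → ℝ)} (hs : Convex ℝ s) (hsc : IsClosed s)
    {x : Fin d → ℝ} (hx : x ∉ s) :
    ∃ (g : Fin d → ℝ) (u : ℝ), (∀ y ∈ s, g ⬝ᵥ y < u) ∧ u < g ⬝ᵥ x := by
  obtain ⟨f, u, hf, hu⟩ := geometric_hahn_banach_closed_point hs hsc hx
  have hfg : ∀ y, f y = (fun i => f (fun j => if i = j then 1 else 0)) ⬝ᵥ y := fun y => by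
    rw [dotProduct_comm]
    exact (f : (Fin d → ℝ) →ₗ[ℝ] ℝ).pi_apply_eq_sum_univ y
  exact ⟨_, u, fun y hy => hfg y ▸ hf y hy, hfg x ▸ hu⟩

lemma exists_dotProduct_lt_of_mem_interior {s : Set (Fin d → ℝ)} {x g : Fin d → ℝ}
    (hx : x ∈ interior s) (hg : g ≠ 0) : ∃ y ∈ s, g ⬝ᵥ y < g ⬝ᵥ x := by
  have hlim : Tendsto (fun t : ℝ => x - t • g) (𝓝[>] 0) (𝓝 x) := by
    have : Continuous fun t : ℝ => x - t • g := by fun_prop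
    simpa using (this.tendsto 0).mono_left nhdsWithin_le_nhds
  obtain ⟨t, hts, ht⟩ :=
    ((hlim.eventually (mem_interior_iff_mem_nhds.1 hx)).and self_mem_nhdsWithin).exists
  refine ⟨x - t • g, hts, ?_⟩
  have hgg : 0 < g ⬝ᵥ g := by simpa using Matrix.dotProduct_self_star_pos_iff.2 hg
  rw [dotProduct_sub, dotProduct_smul, smul_eq_mul, sub_lt_self_iff]
  exact mul_pos ht hgg

variable {a : ι → Fin d → ℝ} {b : ι → ℝ}

lemma convex_polyhedron : Convex ℝ (polyhedron a b) := by
  simp only [polyhedron, ofPred_forall]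
  exact convex_iInter fun j => convex_setOf_le_dotProduct (b j) (a j)

lemma mem_interior_polyhedron [Finite ι] {x : Fin d → ℝ} (hx : ∀ j, b j < a j ⬝ᵥ x) :
    x ∈ interior (polyhedron a b) := by
  have hopen : IsOpen {y : Fin d → ℝ | ∀ j, b j < a j ⬝ᵥ y} := by
    simp only [ofPred_forall]
    exact isOpen_iInter_of_finite fun j => isOpen_lt continuous_const (by fun_prop)
  exact interior_maximal (fun y hy j => (hy j).le) hopen hx

lemma lt_dotProduct_of_mem_interior_polyhedron {x : Fin d → ℝ}
    (hx : x ∈ interior (polyhedron a b)) {j : ι} (hj : a j ≠ 0) : b j < a j ⬝ᵥ x :=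
  let ⟨_, hy, hlt⟩ := exists_dotProduct_lt_of_mem_interior hx hj
  (hy j).trans_lt hlt

lemma exists_add_smul_mem_polyhedron [Finite ι] {p z : Fin d → ℝ} (hp : p ∈ polyhedron a b)
    (hz : ∀ j, a j ⬝ᵥ p = b j → 0 ≤ a j ⬝ᵥ z) : ∃ t : ℝ, 0 < t ∧ p + t • z ∈ polyhedron a b := by
  suffices ∀ᶠ t in 𝓝[>] (0 : ℝ), p + t • z ∈ polyhedron a b by
    obtain ⟨t, ht, htpos⟩ := (this.and self_mem_nhdsWithin).exists
    exact ⟨t, htpos, ht⟩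
  refine eventually_all.2 fun j => ?_
  simp only [dotProduct_add, dotProduct_smul, smul_eq_mul]
  rcases (hp j).eq_or_lt with htight | hslack
  · filter_upwards [self_mem_nhdsWithin] with t ht
    nlinarith [hz j htight.symm, mem_Ioi.1 ht]
  · have hlim : Tendsto (fun t : ℝ => a j ⬝ᵥ p + t * a j ⬝ᵥ z) (𝓝[>] 0) (𝓝 (a j ⬝ᵥ p)) := by
      have : Continuous fun t : ℝ => a j ⬝ᵥ p + t * a j ⬝ᵥ z := by fun_prop
      simpa using (this.tendsto 0).mono_left nhdsWithin_le_nhds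
    exact (hlim.eventually (eventually_gt_nhds hslack)).mono fun _ => le_of_lt

/-- Any `x` in the second polyhedron gives a feasible direction `x - v` at `p`, because the
facets tight at `p` are tight at `v`. -/
lemma isMinOn_polyhedron_of_tight [Finite ι] {c : ι → ℝ} {ρ p v : Fin d → ℝ}
    (hp : p ∈ polyhedron a b) (hmin : IsMinOn (ρ ⬝ᵥ ·) (polyhedron a b) p)
    (htight : ∀ j, a j ⬝ᵥ p = b j → a j ⬝ᵥ v = c j) :
    IsMinOn (ρ ⬝ᵥ ·) (polyhedron a c) v := by
  refine isMinOn_iff.2 fun x hx => ?_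
  obtain ⟨t, ht, hpt⟩ := exists_add_smul_mem_polyhedron hp (z := x - v) fun j hj => by
    rw [dotProduct_sub, htight j hj, sub_nonneg]
    exact hx j
  have := isMinOn_iff.1 hmin _ hpt
  simp only [dotProduct_add, dotProduct_smul, dotProduct_sub, smul_eq_mul] at this
  nlinarith

lemma eq_zero_of_forall_add_smul_mem {E : Type*} [NormedAddCommGroup E] [NormedSpace ℝ E]
    {s : Set E} (hs : IsBounded s) {x z : E} (h : ∀ t : ℝ, 0 ≤ t → x + t • z ∈ s) : z = 0 := by
  obtain ⟨R, hR, hRs⟩ := hs.exists_pos_norm_le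
  by_contra hz
  have hzpos := norm_pos_iff.2 hz
  set t := (R + ‖x‖ + 1) / ‖z‖
  have hxt := hRs _ (h t (by positivity))
  have : ‖t • z‖ ≤ ‖x + t • z‖ + ‖x‖ := by
    simpa using norm_sub_le (x + t • z) x
  rw [norm_smul, Real.norm_of_nonneg (by positivity), div_mul_cancel₀ _ hzpos.ne'] at this
  linarith

lemma not_forall_pos_dotProduct [Nonempty ι] (hb : IsBounded (polyhedron a b))
    (hne : (polyhedron a b).Nonempty) (z : Fin d → ℝ) : ¬ ∀ j, 0 < a j ⬝ᵥ z := by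
  intro hz
  obtain ⟨p, hp⟩ := hne
  have hz0 : z = 0 := eq_zero_of_forall_add_smul_mem (x := p) hb fun t ht j => by
    rw [dotProduct_add, dotProduct_smul, smul_eq_mul]
    nlinarith [hp j, hz j]
  obtain ⟨j⟩ := ‹Nonempty ι›
  simpa [hz0] using hz j

lemma nonempty_of_isBounded_polyhedron (hd : 0 < d) (hb : IsBounded (polyhedron a b)) :
    Nonempty ι := by
  by_contra h
  have : IsEmpty ι := not_nonempty_iff.1 h
  have : Nonempty (Fin d) := ⟨⟨0, hd⟩⟩
  exact NormedSpace.unbounded_univ ℝ (Fin d → ℝ) (by simpa [polyhedron] using hb)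

lemma isBounded_polyhedron_neg_one [Finite ι] (hb : IsBounded (polyhedron a b)) {x : Fin d → ℝ}
    (hx : ∀ j, b j < a j ⬝ᵥ x) : IsBounded (polyhedron a fun _ => -1) := by
  obtain ⟨δ, hδ, hδx⟩ : ∃ δ > 0, ∀ j, b j + δ ≤ a j ⬝ᵥ x := by
    have : ∀ᶠ δ in 𝓝[>] (0 : ℝ), ∀ j, b j + δ ≤ a j ⬝ᵥ x :=
      eventually_all.2 fun j => (eventually_lt_nhds (sub_pos.2 (hx j))).filter_mono
        nhdsWithin_le_nhds |>.mono fun δ hδ => by linarith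
    exact (this.and self_mem_nhdsWithin).exists.imp fun δ h => ⟨h.2, h.1⟩
  refine ((hb.add (isBounded_singleton (x := -x))).smul₀ δ⁻¹).subset fun y hy => ?_
  have hmem : x + δ • y ∈ polyhedron a b := fun j => by
    rw [dotProduct_add, dotProduct_smul, smul_eq_mul]
    nlinarith [hδx j, hy j]
  have : y = δ⁻¹ • ((x + δ • y) + -x) := by
    rw [add_neg_cancel_comm, inv_smul_smul₀ hδ.ne']
  exact this ▸ smul_mem_smul_set (add_mem_add hmem rfl)

lemma zero_mem_convexHull_range [Finite ι] [Nonempty ι] (hb : IsBounded (polyhedron a b))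
    (hne : (polyhedron a b).Nonempty) : (0 : Fin d → ℝ) ∈ convexHull ℝ (range a) := by
  by_contra h0
  obtain ⟨g, u, hg, hu⟩ := exists_dotProduct_separation (convex_convexHull ℝ _)
    ((finite_range a).isCompact_convexHull ℝ).isClosed h0
  refine not_forall_pos_dotProduct hb hne (-g) fun j => ?_
  have := hg _ (subset_convexHull ℝ _ (mem_range_self j))
  rw [dotProduct_zero] at hu
  rw [dotProduct_neg, dotProduct_comm]
  linarith

lemma convex_polarDual (s : Set (Fin d → ℝ)) : Convex ℝ (polarDual s) := by
  have : polarDual s = ⋂ x ∈ s, {y | -1 ≤ x ⬝ᵥ y} := by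
    ext y
    simp only [polarDual, mem_iInter, mem_ofPred_eq, dotProduct_comm _ y]
    rfl
  rw [this]
  exact convex_iInter₂ fun x _ => convex_setOf_le_dotProduct (-1) x

lemma polarDual_polyhedron_neg_one [Finite ι] (h0 : (0 : Fin d → ℝ) ∈ convexHull ℝ (range a)) :
    polarDual (polyhedron a fun _ => -1) = convexHull ℝ (range a) := by
  refine Subset.antisymm (fun y hy => ?_)
    (convexHull_min (by rintro _ ⟨j, rfl⟩ x hx; exact hx j) (convex_polarDual _))
  by_contra hyc
  obtain ⟨g, u, hg, hu⟩ := exists_dotProduct_separation (convex_convexHull ℝ _)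
    ((finite_range a).isCompact_convexHull ℝ).isClosed hyc
  have hu0 : 0 < u := by simpa using hg 0 h0
  have hgQ : (-u⁻¹) • g ∈ polyhedron a fun _ => -1 := fun j => by
    have := hg _ (subset_convexHull ℝ _ (mem_range_self j))
    rw [dotProduct_smul, smul_eq_mul, dotProduct_comm, neg_mul, neg_le_neg_iff,
      inv_mul_le_one₀ hu0]
    exact this.le
  have : -1 ≤ y ⬝ᵥ ((-u⁻¹) • g) := hy _ hgQ
  rw [dotProduct_smul, smul_eq_mul, dotProduct_comm, neg_mul, neg_le_neg_iff,
    inv_mul_le_one₀ hu0] at this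
  linarith

lemma mem_frontier_polarDual {s : Set (Fin d → ℝ)} {x y : Fin d → ℝ} (hy : y ∈ polarDual s)
    (hx : x ∈ s) (hyx : y ⬝ᵥ x = -1) : y ∈ frontier (polarDual s) := by
  refine ⟨subset_closure hy, fun hint => ?_⟩
  have hx0 : x ≠ 0 := by
    rintro rfl
    simp at hyx
  obtain ⟨z, hz, hlt⟩ := exists_dotProduct_lt_of_mem_interior hint hx0
  have : -1 ≤ z ⬝ᵥ x := hz x hx
  rw [dotProduct_comm x, dotProduct_comm x, hyx] at hlt
  linarith

end Polyhedron

section Lattice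

variable {d : ℕ}

lemma add_mem_latticePoints {x y : Fin d → ℝ} (hx : x ∈ latticePoints d)
    (hy : y ∈ latticePoints d) : x + y ∈ latticePoints d := fun i => by
  obtain ⟨k, hk⟩ := hx i
  obtain ⟨l, hl⟩ := hy i
  exact ⟨k + l, by simp [hk, hl]⟩

lemma intCast_smul_mem_latticePoints (k : ℤ) {x : Fin d → ℝ} (hx : x ∈ latticePoints d) :
    (k : ℝ) • x ∈ latticePoints d := fun i => by
  obtain ⟨l, hl⟩ := hx i
  exact ⟨k * l, by simp [hl]⟩

lemma exists_intCast_eq_pairing (n : Fin d → ℤ) {x : Fin d → ℝ} (hx : x ∈ latticePoints d) :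
    ∃ k : ℤ, pairing n x = k := by
  choose z hz using hx
  exact ⟨∑ i, n i * z i, by simp [pairing, hz]⟩

lemma Bornology.IsBounded.finite_inter_latticePoints {s : Set (Fin d → ℝ)} (hs : IsBounded s) :
    (s ∩ latticePoints d).Finite := by
  let cast : (Fin d → ℤ) → Fin d → ℝ := fun z i => z i
  have hcast : AntilipschitzWith 1 cast := AntilipschitzWith.of_le_mul_dist fun z w => by
    simp only [NNReal.coe_one, one_mul]
    refine (dist_pi_le_iff dist_nonneg).2 fun i => ?_
    rw [← Int.dist_cast_real]
    exact dist_le_pi_dist (cast z) (cast w) i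
  have hfin : (cast ⁻¹' s).Finite :=
    (hcast.isBounded_preimage hs).isCompact_closure.finite_of_discrete.subset subset_closure
  refine (hfin.image cast).subset fun x ⟨hxs, hx⟩ => ?_
  choose z hz using hx
  have hxz : cast z = x := funext fun i => (hz i).symm
  exact ⟨z, show cast z ∈ s from hxz ▸ hxs, hxz⟩

lemma isLatticePolytope_of_forall_exists_isMinOn {S : Set (Fin d → ℝ)} (hb : IsBounded S)
    (hS : Convex ℝ S) (hmin : ∀ ρ : Fin d → ℝ, ∃ v ∈ S ∩ latticePoints d, IsMinOn (ρ ⬝ᵥ ·) S v) :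
    IsLatticePolytope S := by
  have hfin := hb.finite_inter_latticePoints
  refine ⟨hfin.toFinset, by simp, ?_⟩
  rw [hfin.coe_toFinset]
  refine Subset.antisymm (fun x hx => ?_) (convexHull_min inter_subset_left hS)
  by_contra hxc
  obtain ⟨g, u, hg, hu⟩ := exists_dotProduct_separation (convex_convexHull ℝ _)
    (hfin.isCompact_convexHull ℝ).isClosed hxc
  obtain ⟨v, hv, hvmin⟩ := hmin (-g)
  have h1 := isMinOn_iff.1 hvmin x hx
  have h2 := hg v (subset_convexHull ℝ _ hv)
  simp only [neg_dotProduct, neg_le_neg_iff] at h1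
  linarith

lemma exists_mem_isMinOn_convexHull {V : Finset (Fin d → ℝ)} (hV : V.Nonempty)
    (ρ : Fin d → ℝ) : ∃ p ∈ V, IsMinOn (ρ ⬝ᵥ ·) (convexHull ℝ ↑V) p := by
  obtain ⟨p, hp, hpmin⟩ := V.exists_min_image (ρ ⬝ᵥ ·) hV
  exact ⟨p, hp, isMinOn_iff.2 fun x hx =>
    convexHull_min hpmin (convex_setOf_le_dotProduct _ ρ) hx⟩

lemma exists_dotProduct_eq_neg_one {ι : Type*} [Finite ι] {n : ι → Fin d → ℤ}
    (hmin : ∀ ρ : Fin d → ℝ, ∃ v ∈ polyhedron (fun i j => (n i j : ℝ)) (fun _ => -1) ∩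
      latticePoints d, IsMinOn (ρ ⬝ᵥ ·) (polyhedron (fun i j => (n i j : ℝ)) fun _ => -1) v)
    {i : ι} (hi : (fun j => (n i j : ℝ)) ≠ 0) :
    ∃ v ∈ polyhedron (fun i j => (n i j : ℝ)) (fun _ => -1), (fun j => (n i j : ℝ)) ⬝ᵥ v = -1 := by
  obtain ⟨y, hyQ, hy⟩ := exists_dotProduct_lt_of_mem_interior
    (mem_interior_polyhedron (a := fun i j => (n i j : ℝ)) (b := fun _ => -1) (x := 0)
      fun _ => by simp) hi
  obtain ⟨v, ⟨hvQ, hvlat⟩, hvmin⟩ := hmin fun j => n i j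
  obtain ⟨k, hk⟩ := exists_intCast_eq_pairing (n i) hvlat
  change (fun j => (n i j : ℝ)) ⬝ᵥ v = k at hk
  have hlow : (-1 : ℝ) ≤ k := hk ▸ hvQ i
  have hneg : (k : ℝ) < 0 := by
    rw [dotProduct_zero] at hy
    exact hk ▸ (isMinOn_iff.1 hvmin y hyQ).trans_lt hy
  have : k = -1 := by
    have : -1 ≤ k := by exact_mod_cast hlow
    have : k < 0 := by exact_mod_cast hneg
    omega
  exact ⟨v, hvQ, by rw [hk, this]; simp⟩

end Lattice

section NearlyGorenstein

variable {d m : ℕ} {n : Fin m → Fin d → ℤ} {h : Fin m → ℤ}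

lemma intCast_ne_zero_of_gcd_eq_one {v : Fin d → ℤ} (hv : Finset.univ.gcd v = 1) :
    (fun i => (v i : ℝ)) ≠ 0 := by
  intro h0
  have : Finset.univ.gcd v = 0 :=
    Finset.gcd_eq_zero_iff.2 fun i _ => by simpa using congr_fun h0 i
  simp [this] at hv

lemma pos_of_mem_intCone [Nonempty (Fin m)]
    (hb : IsBounded (polyhedron (fun i j => (n i j : ℝ)) fun i => -(h i : ℝ)))
    (hne : (polyhedron (fun i j => (n i j : ℝ)) fun i => -(h i : ℝ)).Nonempty)
    {q : (Fin d → ℝ) × ℝ} (hq : q ∈ intCone n h) : 0 < q.2 := by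
  by_contra hq2
  obtain ⟨p, hp⟩ := hne
  refine not_forall_pos_dotProduct hb ⟨p, hp⟩ (q.1 - q.2 • p) fun j => ?_
  have hqj : -(q.2 * h j) < (fun i => (n j i : ℝ)) ⬝ᵥ q.1 := hq j
  have hpj : -(h j : ℝ) ≤ (fun i => (n j i : ℝ)) ⬝ᵥ p := hp j
  rw [dotProduct_sub, dotProduct_smul, smul_eq_mul]
  nlinarith

/-- The nearly Gorenstein decomposition `(p, 1) = (a, k) + (w, 1 - k)` with `(a, k)` interior
and `(w, 1 - k)` anticanonical yields `v = w + (k - 1) p`, which lies in `{x | n_F(x) ≥ -1}`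
and is tight on every facet through `p`. -/
lemma exists_latticePoint_tight (hng : NGIncl n h) (hpos : ∀ q ∈ intCone n h, 0 < q.2)
    {p : Fin d → ℝ} (hp : p ∈ latticePoints d)
    (hpP : p ∈ polyhedron (fun i j => (n i j : ℝ)) fun i => -(h i : ℝ)) :
    ∃ v ∈ polyhedron (fun i j => (n i j : ℝ)) (fun _ => -1), v ∈ latticePoints d ∧
      ∀ j, pairing (n j) p = -(h j : ℝ) → pairing (n j) v = -1 := by
  have hcone : ((p, 1) : (Fin d → ℝ) × ℝ) ∈ (coneOver n h ∩ latticePairs d) \ {0} :=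
    ⟨⟨fun j => by rw [one_mul]; exact hpP j, hp, 1, by simp⟩, by simp⟩
  obtain ⟨⟨a, _⟩, ⟨ha, -, k, rfl⟩, ⟨w, _⟩, ⟨hw, hwlat, l, rfl⟩, hsum⟩ := hng hcone
  simp only [Prod.mk_add_mk, Prod.mk.injEq] at hsum
  obtain ⟨hawp, hkl⟩ := hsum
  obtain rfl : a = p - w := eq_sub_of_add_eq hawp
  have hk : 1 ≤ k := by
    have : (0 : ℝ) < k := hpos _ ha
    exact_mod_cast this
  have hl : (l : ℝ) = 1 - k := by linarith
  have hk' : (0 : ℝ) ≤ k - 1 := by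
    have : (1 : ℝ) ≤ k := by exact_mod_cast hk
    linarith
  have hwj (j : Fin m) : (k - 1) * h j - 1 ≤ (fun i => (n j i : ℝ)) ⬝ᵥ w := by
    have : -(l * h j : ℝ) - 1 ≤ (fun i => (n j i : ℝ)) ⬝ᵥ w := hw j
    rw [hl] at this
    linarith
  refine ⟨w + ((k - 1 : ℤ) : ℝ) • p, fun j => ?_,
    add_mem_latticePoints hwlat (intCast_smul_mem_latticePoints _ hp), fun j hj => ?_⟩
  · have hpj : -(h j : ℝ) ≤ (fun i => (n j i : ℝ)) ⬝ᵥ p := hpP j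
    show -1 ≤ (fun i => (n j i : ℝ)) ⬝ᵥ (w + ((k - 1 : ℤ) : ℝ) • p)
    rw [dotProduct_add, dotProduct_smul, smul_eq_mul]
    push_cast
    nlinarith [mul_nonneg hk' (neg_le_iff_add_nonneg.1 hpj), hwj j]
  · have haj : -(k * h j : ℝ) < (fun i => (n j i : ℝ)) ⬝ᵥ (p - w) := ha j
    change (fun i => (n j i : ℝ)) ⬝ᵥ p = -(h j) at hj
    rw [dotProduct_sub, hj] at haj
    obtain ⟨A, hA⟩ := exists_intCast_eq_pairing (n j) hwlat
    change (fun i => (n j i : ℝ)) ⬝ᵥ w = A at hA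
    have hAlt : A < (k - 1) * h j := by
      have : (A : ℝ) < (k - 1) * h j := by linarith
      exact_mod_cast this
    have hAle : (A : ℝ) ≤ (k - 1) * h j - 1 := by
      exact_mod_cast Int.le_sub_one_of_lt hAlt
    show (fun i => (n j i : ℝ)) ⬝ᵥ (w + ((k - 1 : ℤ) : ℝ) • p) = -1
    rw [dotProduct_add, dotProduct_smul, smul_eq_mul, hj, hA]
    push_cast
    linarith [hwj j]

lemma exists_latticePoint_isMinOn (hng : NGIncl n h) (hpos : ∀ q ∈ intCone n h, 0 < q.2)
    {V : Finset (Fin d → ℝ)} (hVlat : ↑V ⊆ latticePoints d) (hV : V.Nonempty)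
    (hPV : (polyhedron (fun i j => (n i j : ℝ)) fun i => -(h i : ℝ)) = convexHull ℝ ↑V)
    (ρ : Fin d → ℝ) :
    ∃ v ∈ polyhedron (fun i j => (n i j : ℝ)) (fun _ => -1) ∩ latticePoints d,
      IsMinOn (ρ ⬝ᵥ ·) (polyhedron (fun i j => (n i j : ℝ)) fun _ => -1) v := by
  obtain ⟨p, hpV, hpmin⟩ := exists_mem_isMinOn_convexHull hV ρ
  rw [← hPV] at hpmin
  have hpP := hPV ▸ subset_convexHull ℝ _ hpV
  obtain ⟨v, hvQ, hvlat, htight⟩ := exists_latticePoint_tight hng hpos (hVlat hpV) hpP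
  exact ⟨v, ⟨hvQ, hvlat⟩, isMinOn_polyhedron_of_tight hpP hpmin htight⟩

end NearlyGorenstein

theorem stmt_12 {d : ℕ} (hd : 1 ≤ d) (P : Set (Fin d → ℝ))
    (hP : IsLatticePolytope P) (hfull : (interior P).Nonempty)
    {m : ℕ} (n : Fin m → Fin d → ℤ) (h : Fin m → ℤ)
    (hpres : IsFacetPresentation P n h) (hng : NGIncl n h) :
    ∃ Q : Set (Fin d → ℝ), IsReflexive Q ∧
      (∀ i, (fun j => (n i j : ℝ)) ∈ frontier (polarDual Q) ∩ latticePoints d) ∧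
      (polarDual Q).extremePoints ℝ ⊆ {v | ∃ i, v = fun j => (n i j : ℝ)} := by
  obtain ⟨hPdef, hgcd, -⟩ := hpres
  set N : Fin m → Fin d → ℝ := fun i j => (n i j : ℝ)
  replace hPdef : P = polyhedron N fun i => -(h i : ℝ) := hPdef
  subst hPdef
  obtain ⟨V, hVlat, hPV⟩ := hP
  have hN (i : Fin m) : N i ≠ 0 := intCast_ne_zero_of_gcd_eq_one (hgcd i)
  have hPb : IsBounded (polyhedron N fun i => -(h i : ℝ)) :=
    hPV ▸ (V.finite_toSet.isCompact_convexHull ℝ).isBounded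
  have := nonempty_of_isBounded_polyhedron hd hPb
  obtain ⟨x₀, hx₀⟩ := hfull
  have hne : (polyhedron N fun i => -(h i : ℝ)).Nonempty := ⟨x₀, interior_subset hx₀⟩
  have hmin := exists_latticePoint_isMinOn hng (fun _ => pos_of_mem_intCone hPb hne) hVlat
    (convexHull_nonempty_iff.1 (hPV ▸ hne)) hPV
  have hdual := polarDual_polyhedron_neg_one (zero_mem_convexHull_range hPb hne)
  refine ⟨polyhedron N fun _ => -1, ⟨?_, mem_interior_polyhedron fun _ => by simp, ?_⟩,
    fun i => ⟨?_, fun j => ⟨n i j, rfl⟩⟩, ?_⟩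
  · exact isLatticePolytope_of_forall_exists_isMinOn (isBounded_polyhedron_neg_one hPb
      fun j => lt_dotProduct_of_mem_interior_polyhedron hx₀ (hN j)) convex_polyhedron hmin
  · exact ⟨Finset.univ.image N, fun _ hy => by
      obtain ⟨i, -, rfl⟩ := Finset.mem_image.1 hy
      exact fun j => ⟨n i j, rfl⟩, by simp [hdual]⟩
  · obtain ⟨v, hvQ, hv⟩ := exists_dotProduct_eq_neg_one hmin (hN i)
    exact mem_frontier_polarDual (hdual ▸ subset_convexHull ℝ _ (mem_range_self i)) hvQ hv
  · rw [hdual]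
    exact fun v hv => (extremePoints_convexHull_subset hv).imp fun i hi => hi.symm
end

section
/- Let P ⊆ ℝ^d (d ≥ 1) be a full-dimensional lattice polytope with codegree a satisfying P = ⌊aP⌋ + {P}. Then the remainder polytope {P} is not a single point. -/
open Set Pointwise

/-! If `{P} = {p}`, then `P = ⌊aP⌋ + p`. Every facet `F` of `P` contains a point of `⌊aP⌋ + p`,
and the lattice points of `int(aP)` satisfy `n_F ≥ -a h_F + 1`, so `n_F(p) ≤ (a - 1) h_F - 1`
for every facet. For `a ≥ 2` this makes `-p` an interior lattice point of `(a - 1)P`,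
contradicting the minimality of the codegree; for `a = 1` it makes `-p` a nonzero direction in
the recession cone of the bounded polyhedron `P`. -/

section Pairing

variable {d : ℕ}

def pairingCLM (n : Fin d → ℤ) : (Fin d → ℝ) →L[ℝ] ℝ :=
  ∑ i, (n i : ℝ) • ContinuousLinearMap.proj i

@[simp]
lemma coe_pairingCLM (n : Fin d → ℤ) : ⇑(pairingCLM n) = pairing n := by
  ext x
  simp [pairingCLM, pairing]

lemma pairing_add (n : Fin d → ℤ) (x y : Fin d → ℝ) :
    pairing n (x + y) = pairing n x + pairing n y := by
  simp only [← coe_pairingCLM, map_add]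

lemma pairing_smul (n : Fin d → ℤ) (c : ℝ) (x : Fin d → ℝ) :
    pairing n (c • x) = c * pairing n x := by
  simp only [← coe_pairingCLM, map_smul, smul_eq_mul]

lemma pairing_neg (n : Fin d → ℤ) (x : Fin d → ℝ) : pairing n (-x) = -pairing n x := by
  simp only [← coe_pairingCLM, map_neg]

lemma pairing_zero_right (n : Fin d → ℤ) : pairing n 0 = 0 := by
  simp only [← coe_pairingCLM, map_zero]

lemma isLinearMap_pairing (n : Fin d → ℤ) : IsLinearMap ℝ (pairing n) := by
  rw [← coe_pairingCLM]
  exact (pairingCLM n).toLinearMap.isLinear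

lemma continuous_pairing (n : Fin d → ℤ) : Continuous (pairing n) := by
  rw [← coe_pairingCLM]
  exact (pairingCLM n).continuous

lemma surjective_pairing {n : Fin d → ℤ} (hn : n ≠ 0) : Function.Surjective (pairing n) := by
  rw [← coe_pairingCLM]
  refine ((pairingCLM n).toLinearMap.surjective_or_eq_zero).resolve_right fun h0 => hn ?_
  ext j
  have := LinearMap.congr_fun h0 (Pi.single j 1)
  simpa [pairing, Pi.single_apply] using this

lemma interior_setOf_pairing_ge {n : Fin d → ℤ} (hn : n ≠ 0) (c : ℝ) :
    interior {x | c ≤ pairing n x} = {x | c < pairing n x} := by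
  have hopen : IsOpenMap (pairing n) := by
    simpa using (pairingCLM n).isOpenMap (by simpa using surjective_pairing hn)
  change interior (pairing n ⁻¹' Ici c) = pairing n ⁻¹' Ioi c
  rw [← hopen.preimage_interior_eq_interior_preimage (continuous_pairing n), interior_Ici]

end Pairing

section Lattice

variable {d : ℕ}

lemma neg_mem_latticePoints {x : Fin d → ℝ} (hx : x ∈ latticePoints d) :
    -x ∈ latticePoints d := fun i => by
  obtain ⟨z, hz⟩ := hx i
  exact ⟨-z, by simp [hz]⟩

lemma exists_int_pairing_eq (n : Fin d → ℤ) {x : Fin d → ℝ} (hx : x ∈ latticePoints d) :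
    ∃ z : ℤ, pairing n x = z := by
  choose y hy using hx
  exact ⟨∑ i, n i * y i, by simp [pairing, hy]⟩

lemma add_one_le_pairing_of_lt {n : Fin d → ℤ} {x : Fin d → ℝ} (hx : x ∈ latticePoints d)
    {c : ℤ} (hlt : c < pairing n x) : (c : ℝ) + 1 ≤ pairing n x := by
  obtain ⟨z, hz⟩ := exists_int_pairing_eq n hx
  rw [hz] at hlt ⊢
  exact_mod_cast Int.add_one_le_of_lt (by exact_mod_cast hlt)

lemma add_one_le_pairing_of_mem_floorPoly {R : Set (Fin d → ℝ)} {n : Fin d → ℤ} (hn : n ≠ 0)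
    {c : ℤ} (hR : R ⊆ {x | c ≤ pairing n x}) {f : Fin d → ℝ} (hf : f ∈ floorPoly R) :
    (c : ℝ) + 1 ≤ pairing n f := by
  refine convexHull_min ?_ (convex_halfSpace_ge (isLinearMap_pairing n) _) hf
  rintro w ⟨hwR, hw⟩
  have hlt : (c : ℝ) < pairing n w := by
    simpa [interior_setOf_pairing_ge hn] using interior_mono hR hwR
  exact add_one_le_pairing_of_lt hw hlt

end Lattice

section Polyhedron

variable {d m : ℕ} {P : Set (Fin d → ℝ)} {n : Fin m → Fin d → ℤ} {h : Fin m → ℤ}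

lemma smul_eq_setOf_pairing_ge (hP : P = {x | ∀ i, pairing (n i) x ≥ -(h i : ℝ)})
    {t : ℝ} (ht : 0 < t) :
    t • P = {x | ∀ i, pairing (n i) x ≥ -(t * h i)} := by
  ext x
  simp only [mem_smul_set_iff_inv_smul_mem₀ ht.ne', hP, mem_ofPred_eq, pairing_smul, ge_iff_le,
    le_inv_mul_iff₀ ht, mul_neg]

lemma mem_interior_smul_of_pairing_gt (hP : P = {x | ∀ i, pairing (n i) x ≥ -(h i : ℝ)})
    {t : ℝ} (ht : 0 < t) {x : Fin d → ℝ} (hx : ∀ i, pairing (n i) x > -(t * h i)) :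
    x ∈ interior (t • P) := by
  refine interior_maximal (t := {x | ∀ i, pairing (n i) x > -(t * h i)}) ?_ ?_ (a := x) hx
  · rw [smul_eq_setOf_pairing_ge hP ht]
    exact fun y hy i => (hy i).le
  · simp only [ofPred_forall]
    exact isOpen_iInter_of_finite fun i => isOpen_lt continuous_const (continuous_pairing _)

lemma exists_mem_pairing_eq (hP : P = {x | ∀ i, pairing (n i) x ≥ -(h i : ℝ)})
    (hirr : ∀ i, ∃ x : Fin d → ℝ, pairing (n i) x < -(h i : ℝ) ∧
      ∀ j, j ≠ i → pairing (n j) x ≥ -(h j : ℝ))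
    (hne : P.Nonempty) (i : Fin m) : ∃ q ∈ P, pairing (n i) q = -(h i : ℝ) := by
  obtain ⟨x₀, hx₀⟩ := hne
  rw [hP] at hx₀ ⊢
  obtain ⟨x, hxi, hxj⟩ := hirr i
  obtain ⟨q, hq, hqi⟩ : -(h i : ℝ) ∈ pairing (n i) '' segment ℝ x x₀ :=
    (convex_segment x x₀).isPreconnected.intermediate_value (left_mem_segment ℝ x x₀)
      (right_mem_segment ℝ x x₀) (continuous_pairing _).continuousOn ⟨hxi.le, hx₀ i⟩
  refine ⟨q, fun j => ?_, hqi⟩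
  rcases eq_or_ne j i with rfl | hji
  · exact hqi.ge
  · exact (convex_halfSpace_ge (isLinearMap_pairing (n j)) _).segment_subset (hxj j hji)
      (hx₀ j) hq

lemma eq_zero_of_forall_pairing_nonneg (hP : P = {x | ∀ i, pairing (n i) x ≥ -(h i : ℝ)})
    (hbdd : Bornology.IsBounded P) {x : Fin d → ℝ} (hx : x ∈ P) {v : Fin d → ℝ}
    (hv : ∀ i, 0 ≤ pairing (n i) v) : v = 0 := by
  obtain ⟨r, hr⟩ := hbdd.subset_closedBall x
  have hray : ∀ k : ℕ, (k : ℝ) * ‖v‖ ≤ r := fun k => by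
    have hk : x + (k : ℝ) • v ∈ P := by
      rw [hP] at hx ⊢
      intro i
      rw [pairing_add, pairing_smul]
      nlinarith [hx i, hv i, (k.cast_nonneg : (0 : ℝ) ≤ k)]
    simpa [dist_eq_norm, norm_smul] using hr hk
  by_contra hv0
  obtain ⟨k, hk⟩ := exists_nat_gt (r / ‖v‖)
  have := hray k
  rw [div_lt_iff₀ (norm_pos_iff.mpr hv0)] at hk
  linarith

lemma exists_pairing_gt_neg_one [Nontrivial (Fin d → ℝ)]
    (hP : P = {x | ∀ i, pairing (n i) x ≥ -(h i : ℝ)}) (hbdd : Bornology.IsBounded P)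
    (hne : P.Nonempty) (p : Fin d → ℝ) : ∃ i, -1 < pairing (n i) p := by
  by_contra! hp
  obtain ⟨x, hx⟩ := hne
  have hp0 : p = 0 := neg_eq_zero.mp <| eq_zero_of_forall_pairing_nonneg hP hbdd hx fun i => by
    linarith [hp i, pairing_neg (n i) p]
  have hempty : IsEmpty (Fin m) := ⟨fun i => by linarith [hp i, hp0 ▸ pairing_zero_right (n i)]⟩
  obtain ⟨v, hv⟩ := exists_ne (0 : Fin d → ℝ)
  exact hv (eq_zero_of_forall_pairing_nonneg hP hbdd hx fun i => isEmptyElim i)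

end Polyhedron

lemma IsLatticePolytope.isBounded {d : ℕ} {P : Set (Fin d → ℝ)} (hP : IsLatticePolytope P) :
    Bornology.IsBounded P := by
  obtain ⟨V, -, rfl⟩ := hP
  exact (V.finite_toSet.isCompact_convexHull ℝ).isBounded

lemma pairing_le_of_eq_floorPoly_add_singleton {d m : ℕ} {P : Set (Fin d → ℝ)}
    {n : Fin m → Fin d → ℤ} {h : Fin m → ℤ} (hP : P = {x | ∀ i, pairing (n i) x ≥ -(h i : ℝ)})
    (hirr : ∀ i, ∃ x : Fin d → ℝ, pairing (n i) x < -(h i : ℝ) ∧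
      ∀ j, j ≠ i → pairing (n j) x ≥ -(h j : ℝ))
    (hn : ∀ i, n i ≠ 0) (hne : P.Nonempty) {a : ℕ} (ha : 0 < a) {p : Fin d → ℝ}
    (hdecomp : P = floorPoly ((a : ℝ) • P) + {p}) (i : Fin m) :
    pairing (n i) p ≤ ((a : ℝ) - 1) * h i - 1 := by
  obtain ⟨q, hqP, hqi⟩ := exists_mem_pairing_eq hP hirr hne i
  rw [hdecomp, add_singleton] at hqP
  obtain ⟨f, hf, rfl⟩ := hqP
  have haP : (a : ℝ) • P ⊆ {x | ((-(a * h i) : ℤ) : ℝ) ≤ pairing (n i) x} := by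
    rw [smul_eq_setOf_pairing_ge hP (by exact_mod_cast ha)]
    intro x hx
    simpa using hx i
  have hf_ge := add_one_le_pairing_of_mem_floorPoly (hn i) haP hf
  rw [pairing_add] at hqi
  push_cast at hf_ge
  linarith

theorem stmt_16_general {d : ℕ} (hd : 1 ≤ d) (P : Set (Fin d → ℝ))
    (hP : IsLatticePolytope P)
    {m : ℕ} (n : Fin m → Fin d → ℤ) (h : Fin m → ℤ)
    (hpres : IsFacetPresentation P n h)
    (a : ℕ) (ha : IsCodegree P a)
    (hdecomp : P = floorPoly ((a : ℝ) • P) + remPoly n h a) :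
    ¬ ∃ p : Fin d → ℝ, remPoly n h a = {p} := by
  rintro ⟨p, hrem⟩
  obtain ⟨hPeq, hprim, hirr⟩ := hpres
  obtain ⟨ha1, ⟨z, hz, -⟩, hmin⟩ := ha
  have hp : p ∈ latticePoints d := ((convexHull_eq_singleton.mp hrem).ge rfl).1
  have hne : P.Nonempty := smul_set_nonempty.mp ⟨z, interior_subset hz⟩
  have hn : ∀ i, n i ≠ 0 := fun i h0 =>
    one_ne_zero ((hprim i).symm.trans (Finset.gcd_eq_zero_iff.mpr fun j _ => by simp [h0]))
  have hle := pairing_le_of_eq_floorPoly_add_singleton hPeq hirr hn hne ha1 (hrem ▸ hdecomp)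
  rcases (by omega : a = 1 ∨ 2 ≤ a) with rfl | ha2
  · have : Nonempty (Fin d) := ⟨⟨0, hd⟩⟩
    obtain ⟨i, hi⟩ := exists_pairing_gt_neg_one hPeq hP.isBounded hne p
    exact hi.not_ge (by simpa using hle i)
  · have hcast : ((a - 1 : ℕ) : ℝ) = a - 1 := by rw [Nat.cast_sub ha1, Nat.cast_one]
    have hpos : (0 : ℝ) < (a - 1 : ℕ) := by exact_mod_cast (by omega : 0 < a - 1)
    have hint : -p ∈ interior (((a - 1 : ℕ) : ℝ) • P) :=
      mem_interior_smul_of_pairing_gt hPeq hpos fun i => by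
        rw [pairing_neg, hcast]
        linarith [hle i]
    have := hmin (a - 1) (by omega) ⟨-p, hint, neg_mem_latticePoints hp⟩
    omega

theorem stmt_16 {d : ℕ} (hd : 1 ≤ d) (P : Set (Fin d → ℝ))
    (hP : IsLatticePolytope P) (hfull : (interior P).Nonempty)
    {m : ℕ} (n : Fin m → Fin d → ℤ) (h : Fin m → ℤ)
    (hpres : IsFacetPresentation P n h)
    (a : ℕ) (ha : IsCodegree P a)
    (hdecomp : P = floorPoly ((a : ℝ) • P) + remPoly n h a) :
    ¬ ∃ p : Fin d → ℝ, remPoly n h a = {p} :=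
  stmt_16_general hd P hP n h hpres a ha hdecomp
end
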